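/- Suppose ᾱ ∈ ℝ^n maximizes D over ℝ^n, i.e. D(α) ≤ D(ᾱ) for all α ∈ ℝ^n. Then for every α ∈ ℝ^n, ‖α − ᾱ‖² ≤ 2⟨g(α), ᾱ − α⟩, where g(α) = Xβ(α) − α − y. -/

import Mathlib

/-!
With the scalar penalty `ω(b) = λ₀ 1[b ≠ 0] + λ₁ |b| + λ₂ b²` (`penalty`), one has
`ψ(t) = min_b (ω(b) - 2 λ₂ t b)`, the minimum being attained at `b = 𝔅(t)`. Summing over the
coordinates, `D(α) = min_β L(β, α)` with minimiser `β(α)`. Each `L(β, ·)` is a concave quadratic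
with Hessian `-I`, so `D(ᾱ) ≤ L(β(α), ᾱ) = D(α) + ⟨g(α), ᾱ - α⟩ - ‖ᾱ - α‖² / 2`, and
`D(α) ≤ D(ᾱ)` gives the claim.
-/

noncomputable section

/-- ℓ₀ "norm": number of nonzero entries, as a real number. -/
def zeroNorm {p : ℕ} (β : EuclideanSpace ℝ (Fin p)) : ℝ :=
  ((Finset.univ.filter fun j => β j ≠ 0).card : ℝ)

/-- ℓ₁ norm. -/
def oneNorm {p : ℕ} (β : EuclideanSpace ℝ (Fin p)) : ℝ := ∑ j, |β j|

/-- `X β`, where `x j` is the `j`-th column of `X`. -/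
def Xmul {n p : ℕ} (x : Fin p → EuclideanSpace ℝ (Fin n))
    (β : EuclideanSpace ℝ (Fin p)) : EuclideanSpace ℝ (Fin n) :=
  ∑ j, β j • x j

/-- Primal objective `P(β)`. -/
def Pobj {n p : ℕ} (x : Fin p → EuclideanSpace ℝ (Fin n)) (y : EuclideanSpace ℝ (Fin n))
    (l0 l1 l2 : ℝ) (β : EuclideanSpace ℝ (Fin p)) : ℝ :=
  (1/2) * ‖y - Xmul x β‖^2 + l0 * zeroNorm β + l1 * oneNorm β + l2 * ‖β‖^2

/-- Lagrangian `L(β, α)`. -/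
def Lag {n p : ℕ} (x : Fin p → EuclideanSpace ℝ (Fin n)) (y : EuclideanSpace ℝ (Fin n))
    (l0 l1 l2 : ℝ) (β : EuclideanSpace ℝ (Fin p)) (α : EuclideanSpace ℝ (Fin n)) : ℝ :=
  (inner ℝ α (Xmul x β) : ℝ) - (1/2) * ‖α‖^2 - (inner ℝ y α : ℝ)
    + l0 * zeroNorm β + l1 * oneNorm β + l2 * ‖β‖^2

/-- `η_j(α) = −⟨x_j, α⟩ / (2 λ₂)`. -/
def etav {n p : ℕ} (x : Fin p → EuclideanSpace ℝ (Fin n)) (l2 : ℝ)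
    (α : EuclideanSpace ℝ (Fin n)) (j : Fin p) : ℝ :=
  -(inner ℝ (x j) α : ℝ) / (2 * l2)

/-- Threshold `η₀ = (2√(λ₀λ₂) + λ₁)/(2λ₂)`. -/
def eta0 (l0 l1 l2 : ℝ) : ℝ := (2 * Real.sqrt (l0 * l2) + l1) / (2 * l2)

/-- Scalar function `ψ` appearing in the dual objective. -/
def psi (l0 l1 l2 : ℝ) (t : ℝ) : ℝ :=
  if eta0 l0 l1 l2 ≤ |t| then -l2 * (|t| - l1 / (2 * l2))^2 + l0 else 0

/-- Dual objective `D(α)` for the square loss. -/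
def Dobj {n p : ℕ} (x : Fin p → EuclideanSpace ℝ (Fin n)) (y : EuclideanSpace ℝ (Fin n))
    (l0 l1 l2 : ℝ) (α : EuclideanSpace ℝ (Fin n)) : ℝ :=
  -(1/2) * ‖α‖^2 - (inner ℝ y α : ℝ) + ∑ j : Fin p, psi l0 l1 l2 (etav x l2 α j)

/-- Thresholding map `𝔅`. -/
def Bth (l0 l1 l2 : ℝ) (t : ℝ) : ℝ :=
  if eta0 l0 l1 l2 ≤ |t| then Real.sign t * (|t| - l1 / (2 * l2)) else 0

/-- Primal-dual link `β(α)` with entries `β_j(α) = 𝔅(η_j(α))`. -/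
def betaOf {n p : ℕ} (x : Fin p → EuclideanSpace ℝ (Fin n)) (l0 l1 l2 : ℝ)
    (α : EuclideanSpace ℝ (Fin n)) : EuclideanSpace ℝ (Fin p) :=
  WithLp.toLp 2 (fun j => Bth l0 l1 l2 (etav x l2 α j))

/-- `(β̄, ᾱ)` is a saddle point of the Lagrangian `L`. -/
def IsSaddle {n p : ℕ} (x : Fin p → EuclideanSpace ℝ (Fin n)) (y : EuclideanSpace ℝ (Fin n))
    (l0 l1 l2 : ℝ) (βb : EuclideanSpace ℝ (Fin p)) (αb : EuclideanSpace ℝ (Fin n)) : Prop :=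
  (∀ α, Lag x y l0 l1 l2 βb α ≤ Lag x y l0 l1 l2 βb αb) ∧
  (∀ β, Lag x y l0 l1 l2 βb αb ≤ Lag x y l0 l1 l2 β αb)

def penalty (l0 l1 l2 b : ℝ) : ℝ := l0 * (if b ≠ 0 then 1 else 0) + l1 * |b| + l2 * b ^ 2

section Penalty

variable {l0 l1 l2 : ℝ}

lemma eta0_le_abs_iff (hl2 : 0 < l2) (t : ℝ) :
    eta0 l0 l1 l2 ≤ |t| ↔ √(l0 * l2) ≤ l2 * (|t| - l1 / (2 * l2)) := by
  have hc : l2 * (l1 / (2 * l2)) = l1 / 2 := by field_simp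
  rw [eta0, div_le_iff₀ (by positivity), mul_sub, hc]
  constructor <;> intro h <;> linarith

lemma psi_nonpos (hl0 : 0 ≤ l0) (hl2 : 0 < l2) (s : ℝ) : psi l0 l1 l2 s ≤ 0 := by
  simp only [psi, eta0_le_abs_iff hl2]
  split_ifs with hs
  · have ha : √(l0 * l2) ^ 2 = l0 * l2 := Real.sq_sqrt (by positivity)
    nlinarith [mul_self_le_mul_self (Real.sqrt_nonneg _) hs]
  · rfl

lemma psi_le_penalty_sub (hl0 : 0 ≤ l0) (hl2 : 0 < l2) (s b : ℝ) :
    psi l0 l1 l2 s ≤ penalty l0 l1 l2 b - 2 * l2 * s * b := by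
  rcases eq_or_ne b 0 with rfl | hb
  · simpa [penalty] using psi_nonpos hl0 hl2 s
  obtain ⟨c, rfl⟩ : ∃ c, l1 = 2 * l2 * c := ⟨l1 / (2 * l2), by field_simp⟩
  have ha : √(l0 * l2) ^ 2 = l0 * l2 := Real.sq_sqrt (by positivity)
  have hsb : s * b ≤ |s| * |b| := by rw [← abs_mul]; exact le_abs_self _
  have hlow : l0 + l2 * |b| ^ 2 - 2 * l2 * (|s| - c) * |b|
      ≤ penalty l0 (2 * l2 * c) l2 b - 2 * l2 * s * b := by
    rw [penalty, if_pos hb, sq_abs]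
    nlinarith [mul_le_mul_of_nonneg_left hsb hl2.le]
  simp only [psi, eta0_le_abs_iff hl2, mul_div_cancel_left₀ c (by positivity : 2 * l2 ≠ 0)]
  generalize |s| - c = d at hlow ⊢
  have hu : 0 ≤ |b| := abs_nonneg b
  generalize |b| = u at hlow hu
  split_ifs with hs
  · nlinarith [mul_nonneg hl2.le (sq_nonneg (u - d))]
  · nlinarith [sq_nonneg (l2 * u - √(l0 * l2)),
      mul_le_mul_of_nonneg_right (not_le.mp hs).le (mul_nonneg hl2.le hu)]

lemma psi_eq_penalty_Bth (hl0 : 0 < l0) (hl1 : 0 ≤ l1) (hl2 : 0 < l2) (t : ℝ) :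
    psi l0 l1 l2 t = penalty l0 l1 l2 (Bth l0 l1 l2 t) - 2 * l2 * t * Bth l0 l1 l2 t := by
  obtain ⟨c, rfl⟩ : ∃ c, l1 = 2 * l2 * c := ⟨l1 / (2 * l2), by field_simp⟩
  have hc : 0 ≤ c := nonneg_of_mul_nonneg_right hl1 (by positivity)
  simp only [psi, Bth, eta0_le_abs_iff hl2, mul_div_cancel_left₀ c (by positivity : 2 * l2 ≠ 0)]
  split_ifs with ht
  · have hd : 0 < |t| - c := by
      have : 0 < √(l0 * l2) := by positivity
      nlinarith
    rcases lt_trichotomy t 0 with hneg | rfl | hpos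
    · rw [abs_of_neg hneg] at hd ⊢
      rw [Real.sign_of_neg hneg, penalty, if_pos (by linarith), abs_of_neg (by linarith)]
      ring
    · simp only [abs_zero] at hd
      linarith
    · rw [abs_of_pos hpos] at hd ⊢
      rw [Real.sign_of_pos hpos, penalty, if_pos (by linarith), abs_of_pos (by linarith)]
      ring
  · simp [penalty]

end Penalty

section Lagrangian

variable {n p : ℕ} (x : Fin p → EuclideanSpace ℝ (Fin n)) (y : EuclideanSpace ℝ (Fin n))
  {l0 l1 l2 : ℝ}

lemma penalty_sum (β : EuclideanSpace ℝ (Fin p)) :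
    l0 * zeroNorm β + l1 * oneNorm β + l2 * ‖β‖ ^ 2 = ∑ j, penalty l0 l1 l2 (β j) := by
  simp only [zeroNorm, oneNorm, penalty, EuclideanSpace.real_norm_sq_eq,
    Finset.natCast_card_filter, Finset.mul_sum, Finset.sum_add_distrib]

lemma inner_Xmul (α : EuclideanSpace ℝ (Fin n)) (β : EuclideanSpace ℝ (Fin p)) :
    inner ℝ α (Xmul x β) = ∑ j, β j * inner ℝ (x j) α := by
  simp only [Xmul, inner_sum, real_inner_smul_right, real_inner_comm]

lemma Lag_eq_sum (hl2 : l2 ≠ 0) (β : EuclideanSpace ℝ (Fin p)) (α : EuclideanSpace ℝ (Fin n)) :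
    Lag x y l0 l1 l2 β α = -(1/2) * ‖α‖ ^ 2 - inner ℝ y α
      + ∑ j, (penalty l0 l1 l2 (β j) - 2 * l2 * etav x l2 α j * β j) := by
  have hη : ∀ j, 2 * l2 * etav x l2 α j * β j = -(β j * inner ℝ (x j) α) := fun j => by
    rw [etav]; field_simp
  rw [Lag, Finset.sum_sub_distrib, ← penalty_sum, inner_Xmul]
  simp only [hη, Finset.sum_neg_distrib]
  ring

lemma Dobj_le_Lag (hl0 : 0 ≤ l0) (hl2 : 0 < l2) (β : EuclideanSpace ℝ (Fin p))
    (α : EuclideanSpace ℝ (Fin n)) : Dobj x y l0 l1 l2 α ≤ Lag x y l0 l1 l2 β α := by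
  rw [Lag_eq_sum x y hl2.ne', Dobj]
  gcongr with j
  exact psi_le_penalty_sub hl0 hl2 _ _

lemma Dobj_eq_Lag_betaOf (hl0 : 0 < l0) (hl1 : 0 ≤ l1) (hl2 : 0 < l2)
    (α : EuclideanSpace ℝ (Fin n)) :
    Dobj x y l0 l1 l2 α = Lag x y l0 l1 l2 (betaOf x l0 l1 l2 α) α := by
  rw [Lag_eq_sum x y hl2.ne', Dobj]
  congr 1
  exact Finset.sum_congr rfl fun j _ => psi_eq_penalty_Bth hl0 hl1 hl2 _

lemma Lag_eq_add_inner_sub_sq (β : EuclideanSpace ℝ (Fin p))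
    (a b : EuclideanSpace ℝ (Fin n)) :
    Lag x y l0 l1 l2 β b = Lag x y l0 l1 l2 β a
      + inner ℝ (Xmul x β - a - y) (b - a) - (1/2) * ‖b - a‖ ^ 2 := by
  obtain ⟨v, rfl⟩ : ∃ v, b = a + v := ⟨b - a, by abel⟩
  simp only [Lag, add_sub_cancel_left, norm_add_sq_real, inner_add_left, inner_add_right,
    inner_sub_left, real_inner_comm]
  ring

end Lagrangian

/-- distance to the dual maximizer is controlled by the supergradient. -/
theorem stmt11 (n p : ℕ) (x : Fin p → EuclideanSpace ℝ (Fin n))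
    (y : EuclideanSpace ℝ (Fin n)) (l0 l1 l2 : ℝ)
    (hl0 : 0 < l0) (hl1 : 0 ≤ l1) (hl2 : 0 < l2)
    (αb : EuclideanSpace ℝ (Fin n))
    (hmax : ∀ α : EuclideanSpace ℝ (Fin n), Dobj x y l0 l1 l2 α ≤ Dobj x y l0 l1 l2 αb)
    (g : EuclideanSpace ℝ (Fin n) → EuclideanSpace ℝ (Fin n))
    (hg : ∀ α, g α = Xmul x (betaOf x l0 l1 l2 α) - α - y) :
    ∀ α : EuclideanSpace ℝ (Fin n),
      ‖α - αb‖ ^ 2 ≤ 2 * (inner ℝ (g α) (αb - α) : ℝ) := by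
  intro α
  have hupper := Dobj_le_Lag x y (l1 := l1) hl0.le hl2 (betaOf x l0 l1 l2 α) αb
  rw [Lag_eq_add_inner_sub_sq x y _ α αb, ← Dobj_eq_Lag_betaOf x y hl0 hl1 hl2,
    ← hg] at hupper
  rw [norm_sub_rev]
  linarith [hmax α]
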